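/- The function V = ‖Ṽ‖_∞ − Ṽ is a nonnegative smooth (trigonometric-polynomial) function on ℝ² satisfying: (1) V∘g = V for every g ∈ G (equivalently V∘r = V, V(x+2ν₁) = V(x) and V(x+2ν₂) = V(x) for all x); (2) every point of the kagome lattice Γ is a local minimum of V; and (3) the Hessian of V is positive definite at every point of Γ. -/

import Mathlib

/- STATEMENT 8: the trigonometric-polynomial potential `V = ‖Ṽ‖_∞ − Ṽ` is a nonnegative
smooth function on the plane (identified with `ℂ`), invariant under the symmetries of the
kagome lattice, each point of the kagome lattice is a local minimum of `V`, and the Hessian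
of `V` is positive definite at every point of the lattice. -/

noncomputable section

/-- `ν_ℓ = r^{ℓ−1}(1,0)`, i.e. `e^{i(ℓ−1)π/3}` under the identification `ℝ² ≅ ℂ`. -/
def nuK (ℓ : ℤ) : ℂ := Complex.exp (((ℓ : ℂ) - 1) * Real.pi * Complex.I / 3)

/-- The kagome lattice `Γ = {2α₁ν₁ + 2α₂ν₂ + ν_ℓ : α ∈ ℤ², ℓ ∈ {1,3,5}}`. -/
def GammaK : Set ℂ :=
  {z | ∃ α₁ α₂ ℓ : ℤ, (ℓ = 1 ∨ ℓ = 3 ∨ ℓ = 5) ∧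
    z = 2 * (α₁ : ℂ) * nuK 1 + 2 * (α₂ : ℂ) * nuK 2 + nuK ℓ}

/-- `μ_j = √3 ν_j^⊥`; rotation by `π/2` is multiplication by `i`. -/
def muK (j : ℤ) : ℂ := (Real.sqrt 3 : ℂ) * (Complex.I * nuK j)

/-- The Euclidean dot product `x·μ_j` of the plane, `x·y = Re (x ȳ)`. -/
def dotK (j : ℤ) (x : ℂ) : ℝ := (x * (starRingEnd ℂ) (muK j)).re

/-- `V_j(x) = [cos(π x·μ_j + 3π/2) + 2 cos((π x·μ_j + 3π/2)/3)]²`. -/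
def VjK (j : ℤ) (x : ℂ) : ℝ :=
  (Real.cos (Real.pi * dotK j x + 3 * Real.pi / 2)
    + 2 * Real.cos ((Real.pi * dotK j x + 3 * Real.pi / 2) / 3)) ^ 2

/-- `Ṽ = V₁ + V₃ + V₅`. -/
def VtK (x : ℂ) : ℝ := VjK 1 x + VjK 3 x + VjK 5 x

/-- `V = ‖Ṽ‖_∞ − Ṽ`. -/
def VK (x : ℂ) : ℝ := sSup (Set.range VtK) - VtK x

/-!
Each `V_j` equals `profile (x·μ_j)` for the one-variable profile `(sin πd − 2 sin (πd/3))²`, which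
is even and `3`-periodic, and the three linear forms `x·μ_j` sum to zero. Rotation by `π/3`
permutes the forms up to sign and the translations `t₁, t₂` shift them by multiples of `3`, so `Ṽ`
is `G`-invariant, and every point of `Γ` lies in the `G`-orbit of `ν₁ = 1`.

With `X = cos (2πd/3)` the profile is `(1 − X)(2X − 1)²/2`, and the three values of `X` attached to
forms summing to zero satisfy `x² + y² + z² − 2xyz = 1`. A polynomial inequality on this surface
gives `Ṽ ≤ 18 = Ṽ(1)`, so `V = 18 − Ṽ ≥ 0` vanishes on `Γ`. At `1` the forms take the values
`0, −3/2, 3/2`, where the profile has second derivatives `2π²/9` and `−22π²/3`; as the first form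
is minus the sum of the other two, the Hessian `22π²/3 (a² + b²) − 2π²/9 (a + b)²` is positive
definite.
-/

open Real Function

section Calculus

variable {𝕜 E F : Type*} [NontriviallyNormedField 𝕜] [NormedAddCommGroup E] [NormedSpace 𝕜 E]
  [NormedAddCommGroup F] [NormedSpace 𝕜 F]

theorem Function.Periodic.iteratedFDeriv {f : E → F} {c : E} (h : Periodic f c) (n : ℕ) :
    Periodic (_root_.iteratedFDeriv 𝕜 n f) c := fun x => by
  rw [← iteratedFDeriv_comp_add_right]
  exact congrArg (_root_.iteratedFDeriv 𝕜 n · x) (funext h)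

theorem iteratedFDeriv_map_apply_of_comp_eq {n : ℕ} {f : E → F} (hf : ContDiff 𝕜 n f)
    (L : E →L[𝕜] E) (hL : f ∘ L = f) (x : E) (v : Fin n → E) :
    iteratedFDeriv 𝕜 n f (L x) (L ∘ v) = iteratedFDeriv 𝕜 n f x v := by
  conv_rhs => rw [← hL, L.iteratedFDeriv_comp_right hf x le_rfl]
  rfl

theorem ContinuousLinearMap.iteratedFDeriv_comp_right_apply {n : ℕ} {f : 𝕜 → F}
    (hf : ContDiff 𝕜 n f) (L : E →L[𝕜] 𝕜) (x : E) (v : Fin n → E) :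
    iteratedFDeriv 𝕜 n (f ∘ L) x v = (∏ i, L (v i)) • iteratedDeriv n f (L x) := by
  rw [L.iteratedFDeriv_comp_right hf x le_rfl,
    ContinuousMultilinearMap.compContinuousLinearMap_apply,
    iteratedFDeriv_apply_eq_iteratedDeriv_mul_prod]

end Calculus

theorem iteratedDeriv_two_sq {g g' g'' : ℝ → ℝ} (hg : ∀ x, HasDerivAt g (g' x) x)
    (hg' : ∀ x, HasDerivAt g' (g'' x) x) (x : ℝ) :
    iteratedDeriv 2 (fun y => g y ^ 2) x = 2 * (g' x ^ 2 + g x * g'' x) := by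
  have h : deriv (fun y => g y ^ 2) = fun y => 2 * g y * g' y :=
    funext fun y => ((hg y).pow 2).deriv.trans (by ring)
  rw [iteratedDeriv_succ, iteratedDeriv_one, h]
  exact (((hg x).const_mul 2).mul (hg' x)).deriv.trans (by ring)

namespace Kagome

theorem sq_mul_le_sq_of_abs_le_one {x y : ℝ} (hx : |x| ≤ 1) (hy : |y| ≤ 1) :
    (9 - 8 * (x * y)) ^ 2 * ((1 - x ^ 2) * (1 - y ^ 2))
      ≤ (17 + 9 * (x + y) + 9 * (x * y) - 8 * (x * y) ^ 2) ^ 2 := by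
  obtain ⟨hx₁, hx₂⟩ := abs_le.mp hx
  obtain ⟨hy₁, hy₂⟩ := abs_le.mp hy
  have p : ∀ a b c d e : ℕ,
      0 ≤ (1 + x) ^ a * (1 - x) ^ b * (1 + y) ^ c * (1 - y) ^ d * ((x + y) ^ 2) ^ e :=
    fun a b c d e => by
      have : 0 ≤ 1 + x := by linarith
      have : 0 ≤ 1 - x := by linarith
      have : 0 ≤ 1 + y := by linarith
      have : 0 ≤ 1 - y := by linarith
      positivity
  -- Positivstellensatz certificate: the difference is a nonnegative combination of these products
  linarith [p 0 0 2 0 1, p 0 0 2 0 2, p 0 0 2 1 1, p 0 0 2 1 2, p 0 0 2 2 2, p 0 0 2 3 1,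
    p 0 0 3 1 1, p 0 0 3 3 1, p 0 0 4 3 0, p 0 1 3 2 1, p 0 2 3 0 1, p 0 2 3 3 0,
    p 1 0 2 1 1, p 1 0 4 1 0, p 1 1 1 1 1, p 1 1 1 2 1, p 1 1 1 4 0, p 1 2 3 1 0,
    p 1 3 2 2 0, p 2 0 0 2 1, p 2 0 0 3 1, p 2 0 2 0 0, p 2 0 2 2 0, p 2 0 3 2 0,
    p 2 1 1 4 0, p 2 1 3 0 0]

theorem eight_mul_mul_le {x y z : ℝ} (hx : |x| ≤ 1) (hy : |y| ≤ 1)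
    (h : x ^ 2 + y ^ 2 + z ^ 2 - 2 * (x * y * z) = 1) :
    8 * (x * y * z) ≤ 17 + 9 * (x + y + z) := by
  obtain ⟨hx₁, hx₂⟩ := abs_le.mp hx
  obtain ⟨hy₁, hy₂⟩ := abs_le.mp hy
  have hA : 0 ≤ 17 + 9 * (x + y) + 9 * (x * y) - 8 * (x * y) ^ 2 := by
    nlinarith [mul_nonneg (by linarith : (0 : ℝ) ≤ 1 + x) (by linarith : (0 : ℝ) ≤ 1 + y),
      mul_nonneg (sq_nonneg x) (by nlinarith : (0 : ℝ) ≤ 1 - y ^ 2)]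
  -- With `A` as in `hA`, `17 + 9(x + y + z) - 8xyz = A + (9 - 8xy)(z - xy)`, and the
  -- certificate gives `|(9 - 8xy)(z - xy)| ≤ A`.
  have hz : (z - x * y) ^ 2 = (1 - x ^ 2) * (1 - y ^ 2) := by linear_combination h
  have hle := abs_le_of_sq_le_sq' (a := (9 - 8 * (x * y)) * (z - x * y)) (by
    rw [mul_pow, hz]; exact sq_mul_le_sq_of_abs_le_one hx hy) hA
  nlinarith [hle.1]

theorem sum_le_eighteen {x y z : ℝ} (hx : |x| ≤ 1) (hy : |y| ≤ 1) (hz : |z| ≤ 1)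
    (h : x ^ 2 + y ^ 2 + z ^ 2 - 2 * (x * y * z) = 1) :
    (1 - x) * (2 * x - 1) ^ 2 / 2 + (1 - y) * (2 * y - 1) ^ 2 / 2
      + (1 - z) * (2 * z - 1) ^ 2 / 2 ≤ 18 := by
  have := eight_mul_mul_le hx hy h
  -- `(x + 1)(x - 1)² ≥ 0` bounds each term by `(1 - x)(5 - 4x)/2`, and on the surface
  -- `x² + y² + z² = 1 + 2xyz`
  nlinarith [mul_nonneg (neg_le_iff_add_nonneg.mp (abs_le.mp hx).1) (sq_nonneg (x - 1)),
    mul_nonneg (neg_le_iff_add_nonneg.mp (abs_le.mp hy).1) (sq_nonneg (y - 1)),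
    mul_nonneg (neg_le_iff_add_nonneg.mp (abs_le.mp hz).1) (sq_nonneg (z - 1))]

theorem cos_sq_add_cos_sq_add_cos_add_sq (a b : ℝ) :
    cos a ^ 2 + cos b ^ 2 + cos (a + b) ^ 2 - 2 * (cos a * cos b * cos (a + b)) = 1 := by
  rw [cos_add]
  linear_combination sin b ^ 2 * sin_sq_add_cos_sq a + (1 - cos a ^ 2) * sin_sq_add_cos_sq b

def wave (d : ℝ) : ℝ := sin (π * d) - 2 * sin (π * d / 3)

def profile (d : ℝ) : ℝ := wave d ^ 2

theorem VjK_eq_profile (j : ℤ) (x : ℂ) : VjK j x = profile (dotK j x) := by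
  have h₁ : π * dotK j x + 3 * π / 2 = π * dotK j x + π / 2 + π := by ring
  have h₂ : (π * dotK j x + 3 * π / 2) / 3 = π * dotK j x / 3 + π / 2 := by ring
  rw [VjK, profile, wave, h₂, h₁, cos_add_pi, cos_add_pi_div_two, cos_add_pi_div_two]
  ring

theorem wave_neg (d : ℝ) : wave (-d) = -wave d := by
  simp only [wave, mul_neg, neg_div, sin_neg]
  ring

theorem wave_add_three (d : ℝ) : wave (d + 3) = -wave d := by
  have h₁ : π * (d + 3) = π * d + π + 2 * π := by ring
  have h₂ : π * (d + 3) / 3 = π * d / 3 + π := by ring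
  rw [wave, wave, h₂, h₁, sin_add_two_pi, sin_add_pi, sin_add_pi]
  ring

theorem wave_zero : wave 0 = 0 := by simp [wave]

theorem wave_three_halves : wave (3 / 2) = -3 := by
  have h₁ : π * (3 / 2) = π / 2 + π := by ring
  have h₂ : π * (3 / 2) / 3 = π / 2 := by ring
  rw [wave, h₂, h₁, sin_add_pi, sin_pi_div_two]
  norm_num

theorem hasDerivAt_wave (d : ℝ) :
    HasDerivAt wave (π * cos (π * d) - 2 * π / 3 * cos (π * d / 3)) d := by
  have h := (((hasDerivAt_id d).const_mul π).sin).sub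
    ((((hasDerivAt_id d).const_mul π).div_const 3).sin.const_mul 2)
  exact h.congr_deriv (by simp only [id]; ring)

theorem hasDerivAt_wave_deriv (d : ℝ) :
    HasDerivAt (fun d => π * cos (π * d) - 2 * π / 3 * cos (π * d / 3))
      (-(π ^ 2 * sin (π * d)) + 2 * π ^ 2 / 9 * sin (π * d / 3)) d := by
  have h := ((((hasDerivAt_id d).const_mul π).cos).const_mul π).sub
    ((((hasDerivAt_id d).const_mul π).div_const 3).cos.const_mul (2 * π / 3))
  exact h.congr_deriv (by simp only [id]; ring)

theorem profile_neg (d : ℝ) : profile (-d) = profile d := by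
  rw [profile, profile, wave_neg, neg_sq]

theorem profile_periodic : Periodic profile 3 := fun d => by
  rw [profile, profile, wave_add_three, neg_sq]

theorem contDiff_profile {n : WithTop ℕ∞} : ContDiff ℝ n profile := by
  unfold profile wave
  fun_prop

theorem profile_zero : profile 0 = 0 := by simp [profile, wave_zero]

theorem profile_three_halves : profile (3 / 2) = 9 := by norm_num [profile, wave_three_halves]

theorem profile_eq (d : ℝ) :
    profile d = (1 - cos (2 * (π * d / 3))) * (2 * cos (2 * (π * d / 3)) - 1) ^ 2 / 2 := by
  have h : π * d = 3 * (π * d / 3) := by ring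
  rw [profile, wave, h, sin_three_mul, mul_div_cancel_left₀ _ three_ne_zero, cos_two_mul,
    cos_sq']
  ring

theorem profile_add_add_le {a b c : ℝ} (h : a + b + c = 0) :
    profile a + profile b + profile c ≤ 18 := by
  have hc : 2 * (π * c / 3) = -(2 * (π * a / 3) + 2 * (π * b / 3)) := by
    rw [eq_neg_add_of_add_eq h]; ring
  rw [profile_eq, profile_eq, profile_eq, hc, cos_neg]
  exact sum_le_eighteen (abs_cos_le_one _) (abs_cos_le_one _) (abs_cos_le_one _)
    (cos_sq_add_cos_sq_add_cos_add_sq _ _)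

theorem iteratedDeriv_two_profile (d : ℝ) :
    iteratedDeriv 2 profile d = 2 * ((π * cos (π * d) - 2 * π / 3 * cos (π * d / 3)) ^ 2
      + wave d * (-(π ^ 2 * sin (π * d)) + 2 * π ^ 2 / 9 * sin (π * d / 3))) :=
  iteratedDeriv_two_sq hasDerivAt_wave hasDerivAt_wave_deriv d

theorem iteratedDeriv_two_profile_zero : iteratedDeriv 2 profile 0 = 2 * π ^ 2 / 9 := by
  rw [iteratedDeriv_two_profile, wave_zero]
  simp only [mul_zero, zero_div, cos_zero, zero_mul, add_zero]
  ring

theorem iteratedDeriv_two_profile_three_halves :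
    iteratedDeriv 2 profile (3 / 2) = -(22 * π ^ 2 / 3) := by
  have h₁ : π * (3 / 2) = π / 2 + π := by ring
  have h₂ : π * (3 / 2) / 3 = π / 2 := by ring
  rw [iteratedDeriv_two_profile, wave_three_halves, h₂, h₁, sin_add_pi, cos_add_pi,
    sin_pi_div_two, cos_pi_div_two]
  ring

theorem iteratedDeriv_two_profile_neg (d : ℝ) :
    iteratedDeriv 2 profile (-d) = iteratedDeriv 2 profile d := by
  simpa [profile_neg] using (iteratedDeriv_comp_neg 2 profile d).symm

theorem sqrt_three_sq : √3 ^ 2 = 3 := sq_sqrt (by norm_num)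

theorem nuK_eq_pow (n : ℕ) : nuK (n + 1) = nuK 2 ^ n := by
  rw [nuK, nuK, ← Complex.exp_nat_mul]
  congr 1
  push_cast
  ring

theorem nuK_three_eq_sq : nuK 3 = nuK 2 ^ 2 := by simpa using nuK_eq_pow 2

theorem nuK_five_eq_pow_four : nuK 5 = nuK 2 ^ 4 := by simpa using nuK_eq_pow 4

theorem cexp_pi_mul_I_div_three : Complex.exp (π * Complex.I / 3) = nuK 2 := by
  rw [nuK]
  norm_num

theorem nuK_one : nuK 1 = 1 := by simp [nuK]

theorem nuK_two : nuK 2 = ⟨1 / 2, √3 / 2⟩ := by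
  have h : (π : ℂ) * Complex.I / 3 = (π / 3 : ℝ) * Complex.I := by push_cast; ring
  rw [← cexp_pi_mul_I_div_three, h, Complex.exp_mul_I, ← Complex.ofReal_cos,
    ← Complex.ofReal_sin, cos_pi_div_three, sin_pi_div_three]
  apply Complex.ext <;> simp

theorem nuK_three : nuK 3 = ⟨-(1 / 2), √3 / 2⟩ := by
  rw [nuK_three_eq_sq, pow_two, nuK_two]
  apply Complex.ext <;> simp only [Complex.mul_re, Complex.mul_im] <;> linarith [sqrt_three_sq]

theorem nuK_five : nuK 5 = ⟨-(1 / 2), -(√3 / 2)⟩ := by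
  rw [nuK_five_eq_pow_four, show nuK 2 ^ 4 = (nuK 2 ^ 2) ^ 2 by ring, ← nuK_three_eq_sq,
    pow_two, nuK_three]
  apply Complex.ext <;> simp only [Complex.mul_re, Complex.mul_im] <;> linarith [sqrt_three_sq]

theorem dotK_apply (j : ℤ) (x : ℂ) :
    dotK j x = √3 * ((nuK j).re * x.im - (nuK j).im * x.re) := by
  simp only [dotK, muK, map_mul, Complex.conj_ofReal, Complex.conj_I, Complex.mul_re,
    Complex.mul_im, Complex.conj_re, Complex.conj_im, Complex.ofReal_re, Complex.ofReal_im,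
    Complex.neg_re, Complex.neg_im, Complex.I_re, Complex.I_im]
  ring

theorem dotK_one (x : ℂ) : dotK 1 x = √3 * x.im := by
  simp [dotK_apply, nuK_one]

theorem dotK_three (x : ℂ) : dotK 3 x = -(3 / 2) * x.re - √3 / 2 * x.im := by
  rw [dotK_apply, nuK_three]
  linear_combination (-x.re / 2) * sqrt_three_sq

theorem dotK_five (x : ℂ) : dotK 5 x = 3 / 2 * x.re - √3 / 2 * x.im := by
  rw [dotK_apply, nuK_five]
  linear_combination (x.re / 2) * sqrt_three_sq

theorem dotK_one_add_dotK_three_add_dotK_five (x : ℂ) : dotK 1 x + dotK 3 x + dotK 5 x = 0 := by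
  rw [dotK_one, dotK_three, dotK_five]
  ring

def dotCLM (j : ℤ) : ℂ →L[ℝ] ℝ := innerSL ℝ (muK j)

theorem dotCLM_apply (j : ℤ) (x : ℂ) : dotCLM j x = dotK j x := by
  rw [dotCLM, innerSL_apply_apply, Complex.inner, dotK, mul_comm]

theorem VtK_eq (x : ℂ) :
    VtK x = profile (dotK 1 x) + profile (dotK 3 x) + profile (dotK 5 x) := by
  simp only [VtK, VjK_eq_profile]

theorem VtK_eq_add : VtK = profile ∘ dotCLM 1 + profile ∘ dotCLM 3 + profile ∘ dotCLM 5 :=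
  funext fun x => by simp only [VtK_eq, Pi.add_apply, comp_apply, dotCLM_apply]

theorem contDiff_VtK {n : WithTop ℕ∞} : ContDiff ℝ n VtK := by
  rw [VtK_eq_add]
  exact ((contDiff_profile.comp (dotCLM 1).contDiff).add
    (contDiff_profile.comp (dotCLM 3).contDiff)).add (contDiff_profile.comp (dotCLM 5).contDiff)

theorem contDiff_VK {n : WithTop ℕ∞} : ContDiff ℝ n VK :=
  contDiff_const.sub contDiff_VtK

theorem VtK_le (x : ℂ) : VtK x ≤ 18 := by
  rw [VtK_eq]
  exact profile_add_add_le (dotK_one_add_dotK_three_add_dotK_five x)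

theorem VtK_one : VtK 1 = 18 := by
  rw [VtK_eq, dotK_one, dotK_three, dotK_five]
  norm_num [profile_zero, profile_neg, profile_three_halves]

theorem sSup_range_VtK : sSup (Set.range VtK) = 18 :=
  IsGreatest.csSup_eq ⟨⟨1, VtK_one⟩, Set.forall_mem_range.mpr VtK_le⟩

theorem VK_eq (x : ℂ) : VK x = 18 - VtK x := by rw [VK, sSup_range_VtK]

theorem VK_nonneg (x : ℂ) : 0 ≤ VK x := by
  rw [VK_eq]
  linarith [VtK_le x]

theorem VtK_nuK_two_mul (x : ℂ) : VtK (nuK 2 * x) = VtK x := by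
  have h₁ : dotK 1 (nuK 2 * x) = -dotK 3 x := by
    rw [dotK_one, dotK_three, Complex.mul_im, nuK_two]
    linear_combination (x.re / 2) * sqrt_three_sq
  have h₃ : dotK 3 (nuK 2 * x) = -dotK 5 x := by
    rw [dotK_three, dotK_five, Complex.mul_re, Complex.mul_im, nuK_two]
    linear_combination (-x.re / 4) * sqrt_three_sq
  have h₅ : dotK 5 (nuK 2 * x) = -dotK 1 x := by
    rw [dotK_five, dotK_one, Complex.mul_re, Complex.mul_im, nuK_two]
    linear_combination (-x.re / 4) * sqrt_three_sq
  rw [VtK_eq, VtK_eq, h₁, h₃, h₅, profile_neg, profile_neg, profile_neg]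
  ring

theorem VtK_nuK_two_pow_mul (n : ℕ) (x : ℂ) : VtK (nuK 2 ^ n * x) = VtK x := by
  induction n with
  | zero => rw [pow_zero, one_mul]
  | succ n ih => rw [pow_succ', mul_assoc, VtK_nuK_two_mul, ih]

theorem VK_comp_mul_nuK_two_pow (n : ℕ) : VK ∘ ContinuousLinearMap.mul ℝ ℂ (nuK 2 ^ n) = VK :=
  funext fun x => by
    rw [comp_apply, ContinuousLinearMap.mul_apply', VK_eq, VK_eq, VtK_nuK_two_pow_mul]

theorem periodic_VtK (α₁ α₂ : ℤ) : Periodic VtK (2 * α₁ * nuK 1 + 2 * α₂ * nuK 2) := fun x => by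
  have hc : 2 * α₁ * nuK 1 + 2 * α₂ * nuK 2 = ⟨2 * α₁ + α₂, √3 * α₂⟩ := by
    rw [nuK_one, nuK_two, mul_one]
    apply Complex.ext <;>
      simp only [Complex.add_re, Complex.add_im, Complex.mul_re, Complex.mul_im, Complex.re_ofNat,
        Complex.im_ofNat, Complex.intCast_re, Complex.intCast_im, mul_zero, zero_mul, sub_zero,
        add_zero, zero_add] <;>
      ring
  have h₁ : dotK 1 (x + (2 * α₁ * nuK 1 + 2 * α₂ * nuK 2)) = dotK 1 x + (α₂ : ℤ) * 3 := by
    rw [hc, dotK_one, dotK_one, Complex.add_im]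
    linear_combination (α₂ : ℝ) * sqrt_three_sq
  have h₃ : dotK 3 (x + (2 * α₁ * nuK 1 + 2 * α₂ * nuK 2))
      = dotK 3 x + (-α₁ - α₂ : ℤ) * 3 := by
    rw [hc, dotK_three, dotK_three, Complex.add_re, Complex.add_im]
    push_cast
    linear_combination (-(α₂ : ℝ) / 2) * sqrt_three_sq
  have h₅ : dotK 5 (x + (2 * α₁ * nuK 1 + 2 * α₂ * nuK 2)) = dotK 5 x + (α₁ : ℤ) * 3 := by
    rw [hc, dotK_five, dotK_five, Complex.add_re, Complex.add_im]
    linear_combination (-(α₂ : ℝ) / 2) * sqrt_three_sq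
  rw [VtK_eq, VtK_eq, h₁, h₃, h₅, profile_periodic.int_mul, profile_periodic.int_mul,
    profile_periodic.int_mul]

theorem periodic_VK (α₁ α₂ : ℤ) : Periodic VK (2 * α₁ * nuK 1 + 2 * α₂ * nuK 2) :=
  (periodic_VtK α₁ α₂).comp (sSup (Set.range VtK) - ·)

theorem exists_eq_of_mem_GammaK {m : ℂ} (hm : m ∈ GammaK) :
    ∃ (n : ℕ) (α₁ α₂ : ℤ), m = nuK 2 ^ n + (2 * α₁ * nuK 1 + 2 * α₂ * nuK 2) := by
  obtain ⟨α₁, α₂, ℓ, hℓ, rfl⟩ := hm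
  rcases hℓ with rfl | rfl | rfl
  · exact ⟨0, α₁, α₂, by rw [pow_zero, ← nuK_one, add_comm]⟩
  · exact ⟨2, α₁, α₂, by rw [nuK_three_eq_sq, add_comm]⟩
  · exact ⟨4, α₁, α₂, by rw [nuK_five_eq_pow_four, add_comm]⟩

theorem iteratedFDeriv_two_VK_nuK_two_pow_mul (n : ℕ) (x v : ℂ) :
    iteratedFDeriv ℝ 2 VK (nuK 2 ^ n * x) ![nuK 2 ^ n * v, nuK 2 ^ n * v]
      = iteratedFDeriv ℝ 2 VK x ![v, v] := by
  rw [← iteratedFDeriv_map_apply_of_comp_eq contDiff_VK _ (VK_comp_mul_nuK_two_pow n) x ![v, v]]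
  congr 1
  funext i
  fin_cases i <;> rfl

theorem VtK_of_mem_GammaK {m : ℂ} (hm : m ∈ GammaK) : VtK m = 18 := by
  obtain ⟨n, α₁, α₂, rfl⟩ := exists_eq_of_mem_GammaK hm
  rw [periodic_VtK, ← mul_one (nuK 2 ^ n), VtK_nuK_two_pow_mul, VtK_one]

theorem iteratedFDeriv_two_VK (x v : ℂ) :
    iteratedFDeriv ℝ 2 VK x ![v, v] = -(iteratedDeriv 2 profile (dotK 1 x) * dotK 1 v ^ 2
      + iteratedDeriv 2 profile (dotK 3 x) * dotK 3 v ^ 2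
      + iteratedDeriv 2 profile (dotK 5 x) * dotK 5 v ^ 2) := by
  have hd : ∀ j, ContDiff ℝ 2 (profile ∘ dotCLM j) :=
    fun j => contDiff_profile.comp (dotCLM j).contDiff
  have hd₁₃ : ContDiff ℝ 2 (profile ∘ dotCLM 1 + profile ∘ dotCLM 3) := (hd 1).add (hd 3)
  rw [show VK = fun x => sSup (Set.range VtK) - VtK x from rfl,
    fun_iteratedFDeriv_sub_apply contDiffAt_const contDiff_VtK.contDiffAt,
    iteratedFDeriv_const_of_ne two_ne_zero, VtK_eq_add,
    iteratedFDeriv_add_apply hd₁₃.contDiffAt (hd 5).contDiffAt,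
    iteratedFDeriv_add_apply (hd 1).contDiffAt (hd 3).contDiffAt]
  simp only [Pi.zero_apply, zero_sub, add_apply, neg_apply,
    ContinuousLinearMap.iteratedFDeriv_comp_right_apply contDiff_profile, dotCLM_apply,
    Fin.prod_univ_two, Matrix.cons_val_zero, Matrix.cons_val_one, smul_eq_mul]
  ring

theorem eq_zero_of_dotK_three_of_dotK_five {w : ℂ} (h₃ : dotK 3 w = 0) (h₅ : dotK 5 w = 0) :
    w = 0 := by
  rw [dotK_three] at h₃
  rw [dotK_five] at h₅
  have hre : w.re = 0 := by linarith
  have him : √3 * w.im = 0 := by linarith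
  exact Complex.ext hre (by simpa using him)

theorem iteratedFDeriv_two_VK_one_pos {w : ℂ} (hw : w ≠ 0) :
    0 < iteratedFDeriv ℝ 2 VK 1 ![w, w] := by
  have hpos : 0 < dotK 3 w ^ 2 + dotK 5 w ^ 2 := by
    by_contra! h
    exact hw (eq_zero_of_dotK_three_of_dotK_five (by nlinarith [sq_nonneg (dotK 5 w)])
      (by nlinarith [sq_nonneg (dotK 3 w)]))
  have hd : dotK 1 w = -(dotK 3 w + dotK 5 w) := by
    linear_combination dotK_one_add_dotK_three_add_dotK_five w
  have h₃ : dotK 3 1 = -(3 / 2) := by rw [dotK_three]; simp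
  have h₅ : dotK 5 1 = 3 / 2 := by rw [dotK_five]; simp
  rw [iteratedFDeriv_two_VK, dotK_one, h₃, h₅, Complex.one_im, mul_zero,
    iteratedDeriv_two_profile_zero, iteratedDeriv_two_profile_neg,
    iteratedDeriv_two_profile_three_halves, hd]
  nlinarith [mul_pos (pow_pos pi_pos 2) hpos,
    mul_nonneg (sq_nonneg π) (sq_nonneg (dotK 3 w - dotK 5 w))]

theorem iteratedFDeriv_two_VK_pos_of_mem_GammaK {m w : ℂ} (hm : m ∈ GammaK) (hw : w ≠ 0) :
    0 < iteratedFDeriv ℝ 2 VK m ![w, w] := by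
  obtain ⟨n, α₁, α₂, rfl⟩ := exists_eq_of_mem_GammaK hm
  have hρ : nuK 2 ^ n ≠ 0 := pow_ne_zero _ (Complex.exp_ne_zero _)
  rw [(periodic_VK α₁ α₂).iteratedFDeriv 2, ← mul_one (nuK 2 ^ n), ← mul_div_cancel₀ w hρ,
    iteratedFDeriv_two_VK_nuK_two_pow_mul]
  exact iteratedFDeriv_two_VK_one_pos (div_ne_zero hw hρ)

end Kagome

open Kagome

theorem stmt8 :
    -- smoothness
    ContDiff ℝ (⊤ : ℕ∞) VK
    -- nonnegativity
    ∧ (∀ x : ℂ, 0 ≤ VK x)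
    -- invariance under the generators of `G` (equivalently under all of `G`):
    -- the rotation `r` of angle `π/3` and the translations `t₁`, `t₂`
    ∧ (∀ x : ℂ, VK (Complex.exp (Real.pi * Complex.I / 3) * x) = VK x)
    ∧ (∀ x : ℂ, VK (x + 2 * nuK 1) = VK x)
    ∧ (∀ x : ℂ, VK (x + 2 * nuK 2) = VK x)
    -- every point of the kagome lattice is a local minimum
    ∧ (∀ m ∈ GammaK, IsLocalMin VK m)
    -- the Hessian is positive definite at every point of the lattice
    ∧ (∀ m ∈ GammaK, ∀ w : ℂ, w ≠ 0 → 0 < iteratedFDeriv ℝ 2 VK m ![w, w]) := by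
  refine ⟨contDiff_VK, VK_nonneg, fun x => ?_, fun x => by simpa using periodic_VK 1 0 x,
    fun x => by simpa using periodic_VK 0 1 x, fun m hm => ?_,
    fun m hm w => iteratedFDeriv_two_VK_pos_of_mem_GammaK hm⟩
  · rw [cexp_pi_mul_I_div_three, VK_eq, VK_eq, VtK_nuK_two_mul]
  · have hm0 : VK m = 0 := by rw [VK_eq, VtK_of_mem_GammaK hm, sub_self]
    exact .of_forall fun y => hm0 ▸ VK_nonneg y

end
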